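/- arXiv:2604.27693 — 2 statements merged into one kernel-verified Lean document; each statement's English description precedes it below -/
import Mathlib

section
/- For every integer k ≥ 1 and every function g : ℕ → ℕ that is monotone, there exists Υ ∈ ℕ such that for every finite multiset of type-counts (n_τ)_{τ ∈ T} over a finite index set T, there exists t ≤ Υ satisfying t ≥ g(Σ_{τ : n_τ < t} n_τ). In words: one can always find a bounded threshold t such that t dominates g applied to the total number of occurrences of all 'rare' types (types occurring fewer than t times), where the bound Υ depends only on g and |T|, not on the counts. -/
/-- Auxiliary chain: iterate `t ↦ g (sum of counts below t)`. -/
def rareChain (g : ℕ → ℕ) {N : ℕ} (cnt : Fin N → ℕ) : ℕ → ℕ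
  | 0 => g 0
  | j + 1 => g (∑ τ ∈ Finset.univ.filter (fun τ => cnt τ < rareChain g cnt j), cnt τ)

/-- Auxiliary uniform bounding chain: iterate `x ↦ g (N * x)`. -/
def rareBound (g : ℕ → ℕ) (N : ℕ) : ℕ → ℕ
  | 0 => g 0
  | j + 1 => g (N * rareBound g N j)

/-- For every `k ≥ 1` and every monotone `g : ℕ → ℕ`, there exists a bound
`Υ` (depending only on `g` and the size `N` of the index set) such that for every family of
counts `cnt : Fin N → ℕ` there is a threshold `t ≤ Υ` with
`t ≥ g(Σ_{τ : cnt τ < t} cnt τ)`: the threshold dominates `g` applied to the total number of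
occurrences of all `t`-rare types. -/
theorem rare_types_threshold (k : ℕ) (hk : 1 ≤ k) (g : ℕ → ℕ) (hg : Monotone g) (N : ℕ) :
    ∃ Υ : ℕ, ∀ cnt : Fin N → ℕ, ∃ t ≤ Υ,
      g (∑ τ ∈ Finset.univ.filter (fun τ => cnt τ < t), cnt τ) ≤ t := by
  classical
  refine ⟨rareBound g N (N + 1), fun cnt => ?_⟩
  set t : ℕ → ℕ := rareChain g cnt with ht
  set S : ℕ → Finset (Fin N) := fun j => Finset.univ.filter (fun τ => cnt τ < t j) with hS
  have ht_succ : ∀ j, t (j + 1) = g (∑ τ ∈ S j, cnt τ) := fun j => rfl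
  have htmono : Monotone t := by
    apply monotone_nat_of_le_succ
    intro j
    induction j with
    | zero => exact hg (Nat.zero_le _)
    | succ n ih =>
      rw [ht_succ, ht_succ]
      apply hg
      apply Finset.sum_le_sum_of_subset
      intro x hx
      simp only [hS, Finset.mem_filter] at hx ⊢
      exact ⟨hx.1, lt_of_lt_of_le hx.2 ih⟩
  have hSmono : ∀ i j, i ≤ j → S i ⊆ S j := by
    intro i j hij x hx
    simp only [hS, Finset.mem_filter] at hx ⊢
    exact ⟨hx.1, lt_of_lt_of_le hx.2 (htmono hij)⟩
  have htT : ∀ j, t j ≤ rareBound g N j := by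
    intro j
    induction j with
    | zero => exact le_refl _
    | succ n ih =>
      rw [ht_succ]
      have h1 : ∑ τ ∈ S n, cnt τ ≤ N * t n := by
        calc ∑ τ ∈ S n, cnt τ ≤ ∑ _τ ∈ S n, t n := by
              apply Finset.sum_le_sum
              intro x hx
              simp only [hS, Finset.mem_filter] at hx
              exact hx.2.le
          _ = (S n).card * t n := by rw [Finset.sum_const, smul_eq_mul]
          _ ≤ N * t n := by
              apply Nat.mul_le_mul_right
              simpa using Finset.card_le_card (Finset.subset_univ (S n))
      calc g (∑ τ ∈ S n, cnt τ) ≤ g (N * t n) := hg h1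
        _ ≤ g (N * rareBound g N n) := hg (Nat.mul_le_mul_left _ ih)
        _ = rareBound g N (n + 1) := rfl
  -- pigeonhole: some i ≤ N with S i = S (i+1)
  have hstab : ∃ i ≤ N, S i = S (i + 1) := by
    by_contra h
    push_neg at h
    have hcard : ∀ i, i ≤ N + 1 → i ≤ (S i).card := by
      intro i
      induction i with
      | zero => intro _; exact Nat.zero_le _
      | succ n ih =>
        intro hi
        have hn : n ≤ N := by omega
        have hss : S n ⊂ S (n + 1) :=
          (hSmono n (n + 1) (Nat.le_succ n)).ssubset_of_ne (h n hn)
        have h1 := Finset.card_lt_card hss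
        have h2 := ih (by omega)
        omega
    have h1 := hcard (N + 1) le_rfl
    have h2 : (S (N + 1)).card ≤ N := by
      simpa using Finset.card_le_card (Finset.subset_univ (S (N + 1)))
    omega
  obtain ⟨i, hiN, hSeq⟩ := hstab
  refine ⟨t (i + 1), le_trans (htmono (by omega : i + 1 ≤ N + 1)) (htT (N + 1)), ?_⟩
  have heq : Finset.univ.filter (fun τ => cnt τ < t (i + 1)) = S i := hSeq.symm
  rw [heq]
  exact (ht_succ i).ge
end

section
/- The class of finite structures isomorphic to a Boolean algebra (2^X, ⊆) for some finite set X of even cardinality is not definable in first-order logic. Specifically, for every k there exist finite sets X and Y with |X| even and |Y| odd such that the powerset lattices (2^X, ⊆) and (2^Y, ⊆) satisfy the same first-order sentences of quantifier rank at most k. -/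
open FirstOrder FirstOrder.Language

/-- Quantifier rank of a first-order (bounded) formula. -/
def qr {L : Language} {α : Type*} : ∀ {n : ℕ}, L.BoundedFormula α n → ℕ
  | _, .falsum => 0
  | _, .equal _ _ => 0
  | _, .rel _ _ => 0
  | _, .imp f g => max (qr f) (qr g)
  | _, .all f => qr f + 1

/-- The powerset lattice `(2^X, ⊆)` as a structure for the language with one binary
relation symbol `≤` (interpreted as inclusion). -/
noncomputable def powersetStr (X : Type) : Language.order.Structure (Set X) :=
  orderStructure (Set X)

attribute [local instance] powersetStr

namespace GurevichEF

open Set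

/-- The cell (atom of the generated Boolean algebra) of a tuple of sets determined by a
pattern `s`. -/
def pcell {X : Type} {l : ℕ} (a : Fin l → Set X) (s : Fin l → Prop) : Set X :=
  {x | ∀ i, x ∈ a i ↔ s i}

/-- The EF-invariant: corresponding cells have the same cardinality, or both have
cardinality at least `2^k`. -/
def EFeq {X Y : Type} {l : ℕ} (k : ℕ) (a : Fin l → Set X) (b : Fin l → Set Y) : Prop :=
  ∀ s : Fin l → Prop, (pcell a s).ncard = (pcell b s).ncard ∨
    (2 ^ k ≤ (pcell a s).ncard ∧ 2 ^ k ≤ (pcell b s).ncard)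

variable {X Y : Type} {l k : ℕ}

lemma EFeq.symm {a : Fin l → Set X} {b : Fin l → Set Y} (h : EFeq k a b) : EFeq k b a := by
  intro s
  rcases h s with h' | h'
  · exact Or.inl h'.symm
  · exact Or.inr h'.symm

lemma EFeq.mono {a : Fin l → Set X} {b : Fin l → Set Y} {k' : ℕ} (h : EFeq k a b)
    (hk : k' ≤ k) : EFeq k' a b := by
  intro s
  rcases h s with h' | h'
  · exact Or.inl h'
  · exact Or.inr ⟨le_trans (Nat.pow_le_pow_right (by norm_num) hk) h'.1,
      le_trans (Nat.pow_le_pow_right (by norm_num) hk) h'.2⟩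

lemma mem_pcell_self {a : Fin l → Set X} (x : X) : x ∈ pcell a (fun i => x ∈ a i) :=
  fun _ => Iff.rfl

lemma pattern_eq_of_mem_pcell {a : Fin l → Set X} {s : Fin l → Prop} {x : X}
    (hx : x ∈ pcell a s) : (fun i => x ∈ a i) = s := by
  funext i
  exact propext (hx i)

lemma efeq_nonempty [Fintype X] [Fintype Y] {a : Fin l → Set X} {b : Fin l → Set Y}
    (h : EFeq k a b) (s : Fin l → Prop) (hne : (pcell a s).Nonempty) :
    (pcell b s).Nonempty := by
  have h1 : 0 < (pcell a s).ncard := (Set.ncard_pos (Set.toFinite _)).mpr hne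
  have h2 : 0 < (pcell b s).ncard := by
    rcases h s with h' | h'
    · omega
    · have := Nat.one_le_two_pow (n := k); omega
  exact (Set.ncard_pos (Set.toFinite _)).mp h2

lemma subset_iff_of_efeq [Fintype X] [Fintype Y] {a : Fin l → Set X} {b : Fin l → Set Y}
    (h : EFeq 0 a b) (i j : Fin l) : a i ⊆ a j ↔ b i ⊆ b j := by
  have key : ∀ {X' Y' : Type} [Fintype X'] [Fintype Y'] {a' : Fin l → Set X'}
      {b' : Fin l → Set Y'}, EFeq 0 a' b' → ¬ a' i ⊆ a' j → ¬ b' i ⊆ b' j := by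
    intro X' Y' _ _ a' b' h' hns
    obtain ⟨x, hxi, hxj⟩ := Set.not_subset.mp hns
    obtain ⟨y, hy⟩ := efeq_nonempty h' (fun i' => x ∈ a' i') ⟨x, mem_pcell_self x⟩
    exact Set.not_subset.mpr ⟨y, (hy i).mpr hxi, fun hc => hxj ((hy j).mp hc)⟩
  constructor
  · intro hab
    by_contra hc
    exact key h.symm hc hab
  · intro hab
    by_contra hc
    exact key h hc hab

lemma exists_split (k N' N x y : ℕ) (hxy : x + y = N')
    (hm : N' = N ∨ (2 ^ (k + 1) ≤ N' ∧ 2 ^ (k + 1) ≤ N)) :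
    ∃ p, p ≤ N ∧ (x = p ∨ (2 ^ k ≤ x ∧ 2 ^ k ≤ p)) ∧
      (y = N - p ∨ (2 ^ k ≤ y ∧ 2 ^ k ≤ N - p)) := by
  have hP : 2 ^ (k + 1) = 2 ^ k + 2 ^ k := by rw [pow_succ]; ring
  have h1 : 1 ≤ 2 ^ k := Nat.one_le_two_pow
  rcases hm with rfl | ⟨h2, h3⟩
  · exact ⟨x, by omega, Or.inl rfl, Or.inl (by omega)⟩
  by_cases hx : x < 2 ^ k
  · exact ⟨x, by omega, Or.inl rfl, Or.inr ⟨by omega, by omega⟩⟩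
  by_cases hy : y < 2 ^ k
  · exact ⟨N - y, by omega, Or.inr ⟨by omega, by omega⟩, Or.inl (by omega)⟩
  exact ⟨2 ^ k, by omega, Or.inr ⟨by omega, by omega⟩, Or.inr ⟨by omega, by omega⟩⟩

lemma pcell_snoc {a : Fin l → Set X} {A : Set X} {s : Fin l → Prop} {t : Prop} :
    pcell (Fin.snoc a A) (Fin.snoc s t) = pcell a s ∩ {x | x ∈ A ↔ t} := by
  ext x
  simp only [pcell, Set.mem_setOf_eq, Set.mem_inter_iff]
  constructor
  · intro hmem
    refine ⟨fun i => ?_, ?_⟩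
    · have := hmem i.castSucc
      simpa [Fin.snoc_castSucc] using this
    · have := hmem (Fin.last l)
      simpa [Fin.snoc_last] using this
  · rintro ⟨h1, h2⟩ i
    refine Fin.lastCases ?_ ?_ i
    · simpa [Fin.snoc_last] using h2
    · intro i'
      simpa [Fin.snoc_castSucc] using h1 i'

lemma efeq_extend [Fintype X] [Fintype Y] {a : Fin l → Set X} {b : Fin l → Set Y}
    (h : EFeq (k + 1) a b) (A : Set X) :
    ∃ B : Set Y, EFeq k (Fin.snoc a A) (Fin.snoc b B) := by
  classical
  -- choose, for every pattern s, a subset of the cell of b of the right size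
  have key : ∀ s : Fin l → Prop, ∃ T : Set Y, T ⊆ pcell b s ∧
      ((pcell a s ∩ A).ncard = T.ncard ∨
        (2 ^ k ≤ (pcell a s ∩ A).ncard ∧ 2 ^ k ≤ T.ncard)) ∧
      ((pcell a s \ A).ncard = (pcell b s).ncard - T.ncard ∨
        (2 ^ k ≤ (pcell a s \ A).ncard ∧ 2 ^ k ≤ (pcell b s).ncard - T.ncard)) := by
    intro s
    have hadd : (pcell a s ∩ A).ncard + (pcell a s \ A).ncard = (pcell a s).ncard :=
      Set.ncard_inter_add_ncard_diff_eq_ncard _ _ (Set.toFinite _)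
    obtain ⟨p, hpN, hp1, hp2⟩ := exists_split k (pcell a s).ncard (pcell b s).ncard
      (pcell a s ∩ A).ncard (pcell a s \ A).ncard hadd (h s)
    obtain ⟨T, hT, hTcard⟩ := Set.exists_subset_card_eq hpN
    exact ⟨T, hT, by rw [hTcard]; exact hp1, by rw [hTcard]; exact hp2⟩
  choose T hTsub hT1 hT2 using key
  refine ⟨{y : Y | y ∈ T (fun i => y ∈ b i)}, ?_⟩
  set B := {y : Y | y ∈ T (fun i => y ∈ b i)} with hB
  have hBcell : ∀ s : Fin l → Prop, pcell b s ∩ B = T s := by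
    intro s
    ext y
    simp only [Set.mem_inter_iff, hB, Set.mem_setOf_eq]
    constructor
    · rintro ⟨hy, hyB⟩
      rwa [pattern_eq_of_mem_pcell hy] at hyB
    · intro hy
      have hcell : y ∈ pcell b s := hTsub s hy
      exact ⟨hcell, by rwa [pattern_eq_of_mem_pcell hcell]⟩
  have hBcell' : ∀ s : Fin l → Prop, pcell b s \ B = pcell b s \ T s := by
    intro s
    ext y
    simp only [Set.mem_diff, hB, Set.mem_setOf_eq, and_congr_right_iff]
    intro hy
    rw [pattern_eq_of_mem_pcell hy]
  intro s'
  have hs' : s' = Fin.snoc (fun i => s' i.castSucc) (s' (Fin.last l)) := by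
    funext i
    refine Fin.lastCases ?_ ?_ i
    · rw [Fin.snoc_last]
    · intro i'; rw [Fin.snoc_castSucc]
  set s : Fin l → Prop := fun i => s' i.castSucc
  set t : Prop := s' (Fin.last l)
  rw [hs', pcell_snoc, pcell_snoc]
  by_cases ht : t
  · have he : {x : X | x ∈ A ↔ t} = A := by ext x; simp [ht]
    have he' : {y : Y | y ∈ B ↔ t} = B := by ext y; simp [ht]
    rw [he, he', hBcell s]
    exact hT1 s
  · have he : pcell a s ∩ {x : X | x ∈ A ↔ t} = pcell a s \ A := by
      ext x; simp only [Set.mem_inter_iff, Set.mem_setOf_eq, Set.mem_diff]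
      constructor
      · rintro ⟨h1, h2⟩; exact ⟨h1, fun hc => ht (h2.mp hc)⟩
      · rintro ⟨h1, h2⟩; exact ⟨h1, ⟨fun hc => absurd hc h2, fun hc => absurd hc ht⟩⟩
    have he' : pcell b s ∩ {y : Y | y ∈ B ↔ t} = pcell b s \ B := by
      ext y; simp only [Set.mem_inter_iff, Set.mem_setOf_eq, Set.mem_diff]
      constructor
      · rintro ⟨h1, h2⟩; exact ⟨h1, fun hc => ht (h2.mp hc)⟩
      · rintro ⟨h1, h2⟩; exact ⟨h1, ⟨fun hc => absurd hc h2, fun hc => absurd hc ht⟩⟩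
    rw [he, he', hBcell' s]
    have hdiff : (pcell b s \ T s).ncard = (pcell b s).ncard - (T s).ncard :=
      Set.ncard_diff (hTsub s) (Set.toFinite _)
    rw [hdiff]
    exact hT2 s

/-- Every term in the language of orders over an empty valuation context is a variable. -/
lemma term_eq_var (t : Language.order.Term (Empty ⊕ Fin l)) :
    ∃ j : Fin l, t = Term.var (Sum.inr j) := by
  cases t with
  | var i =>
    cases i with
    | inl e => exact e.elim
    | inr j => exact ⟨j, rfl⟩
  | func f ts => exact f.elim

lemma main_lemma [Fintype X] [Fintype Y] :
    ∀ {l : ℕ} (φ : Language.order.BoundedFormula Empty l) (k : ℕ), qr φ ≤ k →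
    ∀ (a : Fin l → Set X) (b : Fin l → Set Y), EFeq k a b →
    (φ.Realize (fun e => e.elim) a ↔ φ.Realize (fun e => e.elim) b) := by
  intro l φ
  induction φ with
  | falsum => exact fun _ _ _ _ _ => Iff.rfl
  | equal t₁ t₂ =>
    intro k _ a b hab
    obtain ⟨j₁, rfl⟩ := term_eq_var t₁
    obtain ⟨j₂, rfl⟩ := term_eq_var t₂
    have h0 : EFeq 0 a b := hab.mono (Nat.zero_le _)
    show a j₁ = a j₂ ↔ b j₁ = b j₂
    rw [Set.Subset.antisymm_iff, Set.Subset.antisymm_iff,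
      subset_iff_of_efeq h0 j₁ j₂, subset_iff_of_efeq h0 j₂ j₁]
  | rel R ts =>
    intro k _ a b hab
    cases R with
    | le =>
      obtain ⟨j₁, h₁⟩ := term_eq_var (ts 0)
      obtain ⟨j₂, h₂⟩ := term_eq_var (ts 1)
      have h0 : EFeq 0 a b := hab.mono (Nat.zero_le _)
      show Term.realize (Sum.elim (fun e => e.elim) a) (ts 0) ≤
          Term.realize (Sum.elim (fun e => e.elim) a) (ts 1) ↔
        Term.realize (Sum.elim (fun e => e.elim) b) (ts 0) ≤
          Term.realize (Sum.elim (fun e => e.elim) b) (ts 1)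
      rw [h₁, h₂]
      show a j₁ ≤ a j₂ ↔ b j₁ ≤ b j₂
      exact subset_iff_of_efeq h0 j₁ j₂
  | imp f g ihf ihg =>
    intro k hk a b hab
    have hf : qr f ≤ k := le_trans (le_max_left _ _) hk
    have hg : qr g ≤ k := le_trans (le_max_right _ _) hk
    simp only [BoundedFormula.realize_imp]
    rw [ihf k hf a b hab, ihg k hg a b hab]
  | all f ih =>
    intro k hk a b hab
    have hk1 : 1 ≤ k := le_trans (Nat.le_add_left _ _) hk
    have hk' : qr f ≤ k - 1 := by
      have : qr (BoundedFormula.all f) = qr f + 1 := rfl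
      omega
    have hab' : EFeq ((k - 1) + 1) a b := hab.mono (by omega)
    simp only [BoundedFormula.realize_all]
    constructor
    · intro H y
      obtain ⟨A, hA⟩ := efeq_extend hab'.symm y
      exact (ih (k - 1) hk' _ _ hA.symm).mp (H A)
    · intro H x
      obtain ⟨B, hB⟩ := efeq_extend hab' x
      exact (ih (k - 1) hk' _ _ hB).mpr (H B)

lemma sentence_transfer (k n m : ℕ) (hn : 2 ^ k ≤ n) (hm : 2 ^ k ≤ m)
    (φ : Language.order.Sentence) (hφ : qr φ ≤ k) :
    (Set (Fin n) ⊨ φ ↔ Set (Fin m) ⊨ φ) := by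
  have hE : EFeq (X := Fin n) (Y := Fin m) k (fun i : Fin 0 => Fin.elim0 i)
      (fun i : Fin 0 => Fin.elim0 i) := by
    intro s
    have h1 : pcell (X := Fin n) (fun i : Fin 0 => Fin.elim0 i) s = Set.univ := by
      ext x; simp only [pcell, Set.mem_setOf_eq, Set.mem_univ, iff_true]
      exact fun i => Fin.elim0 i
    have h2 : pcell (X := Fin m) (fun i : Fin 0 => Fin.elim0 i) s = Set.univ := by
      ext x; simp only [pcell, Set.mem_setOf_eq, Set.mem_univ, iff_true]
      exact fun i => Fin.elim0 i
    rw [h1, h2, Set.ncard_univ, Set.ncard_univ, Nat.card_eq_fintype_card,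
      Nat.card_eq_fintype_card, Fintype.card_fin, Fintype.card_fin]
    exact Or.inr ⟨hn, hm⟩
  have := main_lemma (X := Fin n) (Y := Fin m) φ k hφ
    (fun i : Fin 0 => Fin.elim0 i) (fun i : Fin 0 => Fin.elim0 i) hE
  unfold Sentence.Realize Formula.Realize
  convert this using 2

end GurevichEF

/-- **Gurevich's example.** The class of finite structures isomorphic to a
powerset Boolean algebra `(2^X, ⊆)` with `|X|` even is not first-order definable over the
vocabulary of one binary relation; specifically, for every `k` there are an even `n` and an
odd `m` such that `(2^[n], ⊆)` and `(2^[m], ⊆)` satisfy the same first-order sentences of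
quantifier rank at most `k`. -/
theorem even_powerset_not_fo_definable :
    (¬ ∃ φ : Language.order.Sentence,
      ∀ (M : Type) [Fintype M] [Language.order.Structure M],
        (M ⊨ φ) ↔ ∃ (X : Type) (_ : Fintype X), Even (Fintype.card X) ∧
          ∃ e : M ≃ Set X, ∀ a b : M,
            (Structure.RelMap (leSymb : Language.order.Relations 2) ![a, b] ↔
              e a ⊆ e b)) ∧
    (∀ k : ℕ, ∃ n m : ℕ, Even n ∧ Odd m ∧
      ∀ φ : Language.order.Sentence, qr φ ≤ k →
        (@Sentence.Realize _ (Set (Fin n)) (powersetStr (Fin n)) φ ↔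
         @Sentence.Realize _ (Set (Fin m)) (powersetStr (Fin m)) φ)) := by
  have second : ∀ k : ℕ, ∃ n m : ℕ, Even n ∧ Odd m ∧
      ∀ φ : Language.order.Sentence, qr φ ≤ k →
        (@Sentence.Realize _ (Set (Fin n)) (powersetStr (Fin n)) φ ↔
         @Sentence.Realize _ (Set (Fin m)) (powersetStr (Fin m)) φ) := by
    intro k
    refine ⟨2 ^ (k + 1), 2 ^ (k + 1) + 1, ?_, ?_, ?_⟩
    · exact Nat.even_pow.mpr ⟨even_two, by omega⟩
    · exact Even.add_one (Nat.even_pow.mpr ⟨even_two, by omega⟩)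
    · intro φ hφ
      have h : 2 ^ k ≤ 2 ^ (k + 1) := Nat.pow_le_pow_right (by norm_num) (Nat.le_succ k)
      exact GurevichEF.sentence_transfer k _ _ h (by omega) φ hφ
  refine ⟨?_, second⟩
  rintro ⟨φ, hφ⟩
  obtain ⟨n, m, hn, hm, hsent⟩ := second (qr φ)
  have h1 : Set (Fin n) ⊨ φ := by
    rw [hφ]
    refine ⟨Fin n, inferInstance, by simpa using hn, Equiv.refl _, fun a b => ?_⟩
    simp only [Equiv.refl_apply]
    exact Iff.rfl
  have h2 : Set (Fin m) ⊨ φ := (hsent φ le_rfl).mp h1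
  obtain ⟨Z, fZ, hZ, e, -⟩ := (hφ _).mp h2
  letI := fZ
  have hcard : Fintype.card (Set (Fin m)) = Fintype.card (Set Z) := Fintype.card_congr e
  rw [Fintype.card_set, Fintype.card_set, Fintype.card_fin] at hcard
  have hmz : m = Fintype.card Z := Nat.pow_right_injective (by norm_num) hcard
  rw [hmz] at hm
  exact (Nat.not_odd_iff_even.mpr hZ) hm
end
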